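/- In every standard dynamic Odintsov–Wansing model, the fixpoint axioms [α*]φ ↔ (φ ∧ [α][α*]φ) and ⟨α*⟩φ ↔ (φ ∨ ⟨α⟩⟨α*⟩φ) are valid. -/

import Mathlib

mutual
inductive DynProg : Type where
  | atom : ℕ → DynProg
  | seq : DynProg → DynProg → DynProg
  | union : DynProg → DynProg → DynProg
  | star : DynProg → DynProg
  | test : DynForm → DynProg
inductive DynForm : Type where
  | atom : ℕ → DynForm
  | bot  : DynForm
  | snot : DynForm → DynForm
  | and  : DynForm → DynForm → DynForm
  | or   : DynForm → DynForm → DynForm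
  | imp  : DynForm → DynForm → DynForm
  | box  : DynProg → DynForm → DynForm
  | dia  : DynProg → DynForm → DynForm
end

def DynForm.neg (φ : DynForm) : DynForm := .imp φ .bot

def DynForm.biimp (φ ψ : DynForm) : DynForm := .and (.imp φ ψ) (.imp ψ φ)

structure DynModel : Type 1 where
  S : Type
  ne : Nonempty S
  Ra : ℕ → S → S → Prop
  Vp : ℕ → S → Prop
  Vm : ℕ → S → Prop

mutual
def progRel (M : DynModel) : DynProg → M.S → M.S → Prop
  | .atom a, x, y => M.Ra a x y
  | .seq α β, x, z => ∃ y, progRel M α x y ∧ progRel M β y z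
  | .union α β, x, y => progRel M α x y ∨ progRel M β x y
  | .star α, x, y => Relation.ReflTransGen (fun u v => progRel M α u v) x y
  | .test φ, x, y => x = y ∧ dverify M x φ
def dverify (M : DynModel) : M.S → DynForm → Prop
  | x, .atom p => M.Vp p x
  | _, .bot => False
  | x, .snot φ => dfalsify M x φ
  | x, .and φ ψ => dverify M x φ ∧ dverify M x ψ
  | x, .or φ ψ => dverify M x φ ∨ dverify M x ψ
  | x, .imp φ ψ => dverify M x φ → dverify M x ψ
  | x, .box α φ => ∀ y, progRel M α x y → dverify M y φ
  | x, .dia α φ => ∃ y, progRel M α x y ∧ dverify M y φ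
def dfalsify (M : DynModel) : M.S → DynForm → Prop
  | x, .atom p => M.Vm p x
  | _, .bot => True
  | x, .snot φ => dverify M x φ
  | x, .and φ ψ => dfalsify M x φ ∨ dfalsify M x ψ
  | x, .or φ ψ => dfalsify M x φ ∧ dfalsify M x ψ
  | x, .imp φ ψ => dverify M x φ ∧ dfalsify M x ψ
  | x, .box α φ => ∃ y, progRel M α x y ∧ dfalsify M y φ
  | x, .dia α φ => ∀ y, progRel M α x y → dfalsify M y φ
end

def validIn (M : DynModel) (φ : DynForm) : Prop := ∀ x : M.S, dverify M x φ

def DynValid (φ : DynForm) : Prop := ∀ M : DynModel, validIn M φ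

/-! Both axioms unfold the star one step: a path of `α`-steps from `x` is either empty or an
`α`-step followed by a path, which is `Relation.ReflTransGen.cases_head_iff`. Falsification conditions play no part:
verifying a biconditional only asks that verification of the two sides be equivalent. -/

section

variable {M : DynModel}

theorem dverify_biimp {x : M.S} {φ ψ : DynForm} :
    dverify M x (φ.biimp ψ) ↔ (dverify M x φ ↔ dverify M x ψ) := by
  simp only [DynForm.biimp, dverify, iff_def]

theorem progRel_star_iff {α : DynProg} {x y : M.S} :
    progRel M (.star α) x y ↔ x = y ∨ ∃ z, progRel M α x z ∧ progRel M (.star α) z y := by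
  simp only [progRel]
  exact Relation.ReflTransGen.cases_head_iff

theorem dverify_box_star_iff {α : DynProg} {φ : DynForm} {x : M.S} :
    dverify M x (.box (.star α) φ) ↔
      dverify M x φ ∧ dverify M x (.box α (.box (.star α) φ)) := by
  simp only [dverify]
  constructor
  · intro h
    exact ⟨h x (progRel_star_iff.2 (.inl rfl)),
      fun z hxz y hzy => h y (progRel_star_iff.2 (.inr ⟨z, hxz, hzy⟩))⟩
  · rintro ⟨hx, hstep⟩ y hxy
    rcases progRel_star_iff.1 hxy with rfl | ⟨z, hxz, hzy⟩
    exacts [hx, hstep z hxz y hzy]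

theorem dverify_dia_star_iff {α : DynProg} {φ : DynForm} {x : M.S} :
    dverify M x (.dia (.star α) φ) ↔
      dverify M x φ ∨ dverify M x (.dia α (.dia (.star α) φ)) := by
  simp only [dverify]
  constructor
  · rintro ⟨y, hxy, hy⟩
    rcases progRel_star_iff.1 hxy with rfl | ⟨z, hxz, hzy⟩
    exacts [.inl hy, .inr ⟨z, hxz, y, hzy, hy⟩]
  · rintro (hx | ⟨z, hxz, y, hzy, hy⟩)
    exacts [⟨x, progRel_star_iff.2 (.inl rfl), hx⟩,
      ⟨y, progRel_star_iff.2 (.inr ⟨z, hxz, hzy⟩), hy⟩]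

end

theorem stmt11 (M : DynModel) (α : DynProg) (φ : DynForm) :
    validIn M (.biimp (.box (.star α) φ) (.and φ (.box α (.box (.star α) φ)))) ∧
    validIn M (.biimp (.dia (.star α) φ) (.or φ (.dia α (.dia (.star α) φ)))) :=
  ⟨fun _ => dverify_biimp.2 dverify_box_star_iff, fun _ => dverify_biimp.2 dverify_dia_star_iff⟩
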